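/- arXiv:2504.09392 — 2 statements merged into one kernel-verified Lean document; each statement's English description precedes it below -/
import Mathlib

section
/- Every well-founded play-measure (one whose support contains no infinite strictly increasing chain of plays) is victorious: for every partial counterstrategy ρ, inf_m P^m_ρ(σ) = 0. -/
open scoped ENNReal Classical

/-- Active-ending plays over signature `(K, ar)`: alternating sequences of
outputs `k : K` and inputs `i : ar k`. -/
inductive APlay (K : Type) (ar : K → Type) : Type
  | nil : APlay K ar
  | cons (k : K) (i : ar k) (s : APlay K ar) : APlay K ar

variable {K : Type} {ar : K → Type}

/-- Append an output-input pair at the end of an active-ending play. -/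
def APlay.snoc : APlay K ar → (k : K) → ar k → APlay K ar
  | .nil, k, i => .cons k i .nil
  | .cons l j s, k, i => .cons l j (s.snoc k i)

/-- The number of output-input cycles in an active-ending play. -/
def APlay.len : APlay K ar → ℕ
  | .nil => 0
  | .cons _ _ s => s.len + 1

/-- A play-measure: values in `[0,1]` on passive-ending plays (an active play
followed by an output), with `σ_act t = ∑_k σ_pass (t.k)` and
`σ_act (s.k.i) = σ_pass (s.k)`. -/
structure PlayMeasure (K : Type) (ar : K → Type) where
  pass : APlay K ar → K → ℝ≥0∞
  le_one : ∀ t, (∑' k, pass t k) ≤ 1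
  consistent : ∀ s k (i : ar k), pass s k = ∑' l, pass (s.snoc k i) l

/-- The value of a play-measure on an active-ending play. -/
noncomputable def PlayMeasure.act (σ : PlayMeasure K ar) (t : APlay K ar) : ℝ≥0∞ :=
  ∑' k, σ.pass t k

/-- The weight of a play-measure. -/
noncomputable def PlayMeasure.weight (σ : PlayMeasure K ar) : ℝ≥0∞ := σ.act .nil

/-- A partial counterstrategy, given by its set of active-ending plays. -/
structure Counterstrategy (K : Type) (ar : K → Type) where
  act : Set (APlay K ar)
  nil_mem : APlay.nil ∈ act
  prefix_closed : ∀ (s : APlay K ar) (k : K) (i : ar k), s.snoc k i ∈ act → s ∈ act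
  deterministic : ∀ (s : APlay K ar) (k : K) (i j : ar k),
      s.snoc k i ∈ act → s.snoc k j ∈ act → i = j

/-- The passive-ending play `s.k` is a `ρ`-failure: it is in `ρ_pass`
and has no prescribed input. -/
def Counterstrategy.Fails (ρ : Counterstrategy K ar) (s : APlay K ar) (k : K) : Prop :=
  s ∈ ρ.act ∧ ∀ i : ar k, s.snoc k i ∉ ρ.act

/-- `P^m_ρ(σ)`: the sum of `σ_act` over the length-`m` plays in `ρ_act`. -/
noncomputable def contProb (ρ : Counterstrategy K ar) (σ : PlayMeasure K ar) (m : ℕ) : ℝ≥0∞ :=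
  ∑' s : {s : APlay K ar // s ∈ ρ.act ∧ s.len = m}, σ.act s.1

/-- The sum of `σ_pass` over the `ρ`-failures of length `m`. -/
noncomputable def failProb (ρ : Counterstrategy K ar) (σ : PlayMeasure K ar) (m : ℕ) : ℝ≥0∞ :=
  ∑' p : {p : APlay K ar × K // ρ.Fails p.1 p.2 ∧ p.1.len = m}, σ.pass p.1.1 p.1.2

/-- A play-measure is victorious when against every partial counterstrategy,
the probability of play continuing forever is zero. -/
def Victorious (σ : PlayMeasure K ar) : Prop :=
  ∀ ρ : Counterstrategy K ar, (⨅ m, contProb ρ σ m) = 0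

/-- The length-`n` prefix of an infinite play. -/
def prefixPlay (f : ℕ → Σ k : K, ar k) : ℕ → APlay K ar
  | 0 => .nil
  | n + 1 => (prefixPlay f n).snoc (f n).1 (f n).2

/-- A play-measure is well-founded when no infinite play has all its
prefixes in the support. -/
def PlayMeasure.WellFoundedPM (σ : PlayMeasure K ar) : Prop :=
  ¬ ∃ f : ℕ → Σ k : K, ar k, ∀ n, 0 < σ.pass (prefixPlay f n) (f n).1

/-- A play-measure is finitely branching when each active-ending play has
finitely many possible next outputs in the support. -/
def PlayMeasure.FinBranch (σ : PlayMeasure K ar) : Prop :=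
  ∀ t : APlay K ar, {k : K | 0 < σ.pass t k}.Finite

/-- Finitely founded: well-founded and finitely branching. -/
def PlayMeasure.FinFounded (σ : PlayMeasure K ar) : Prop :=
  σ.WellFoundedPM ∧ σ.FinBranch

/-- `f` is uniformly below `g`: there is `d > 0` with `f s + d ≤ g s` on
every passive-ending play `s` in the support of `f`. -/
def UBelow (f g : APlay K ar → K → ℝ≥0∞) : Prop :=
  ∃ d : ℝ≥0∞, 0 < d ∧ ∀ s k, 0 < f s k → f s k + d ≤ g s k


/-!
For a counterstrategy `ρ`, let `V t = limContProb ρ σ t` be the limit (an infimum) of the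
`σ`-mass of the `ρ`-plays that extend `t` by `m` more steps, so that `⨅ m, P^m_ρ(σ) = V nil`.
These masses are bounded by `1`, so monotone convergence gives `V t = ∑ V (t.k.i)` over the
moves `(k, i)` allowed by `ρ`. Hence if `V nil > 0`, one can always step to a child with
`V > 0`, and since `V (t.k.i) ≤ σ_pass (t.k)` this produces an infinite play all of whose
prefixes lie in the support of `σ`, contradicting well-foundedness.
-/

open MeasureTheory

theorem ENNReal.tsum_iInf_of_antitone {α : Type*} {f : ℕ → α → ℝ≥0∞} (hf : Antitone f)
    (h0 : ∑' a, f 0 a ≠ ∞) : ∑' a, ⨅ n, f n a = ⨅ n, ∑' a, f n a := by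
  let : MeasurableSpace α := ⊤
  have hmeas : ∀ g : α → ℝ≥0∞, Measurable g := fun _ => measurable_from_top
  rw [← lintegral_count' (hmeas _),
    lintegral_iInf (fun _ => hmeas _) hf (by rwa [lintegral_count' (hmeas _)])]
  simp only [lintegral_count' (hmeas _)]

variable {K : Type} {ar : K → Type}

theorem APlay.snoc_induction {motive : APlay K ar → Prop} (h_nil : motive .nil)
    (h_snoc : ∀ s k i, motive s → motive (s.snoc k i)) : ∀ s, motive s
  | .nil => h_nil
  | .cons k i u =>
    snoc_induction (motive := fun u => motive (.cons k i u)) (h_snoc .nil k i h_nil)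
      (fun s l j => h_snoc (.cons k i s) l j) u

theorem PlayMeasure.act_snoc (σ : PlayMeasure K ar) (t : APlay K ar) (k : K) (i : ar k) :
    σ.act (t.snoc k i) = σ.pass t k :=
  (σ.consistent t k i).symm

def PlayMeasure.shift (σ : PlayMeasure K ar) (k : K) (i : ar k) : PlayMeasure K ar where
  pass s l := σ.pass (.cons k i s) l
  le_one t := σ.le_one (.cons k i t)
  consistent s l j := σ.consistent (.cons k i s) l j

namespace Counterstrategy

variable (ρ : Counterstrategy K ar)

abbrev Next (t : APlay K ar) : Type := {p : Σ k : K, ar k // t.snoc p.1 p.2 ∈ ρ.act}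

theorem next_fst_injective (t : APlay K ar) :
    Function.Injective fun p : ρ.Next t => p.1.1 := by
  rintro ⟨⟨k, i⟩, hi⟩ ⟨⟨_, j⟩, hj⟩ rfl
  obtain rfl := ρ.deterministic t k i j hi hj
  rfl

theorem cons_nil_mem {k : K} {i : ar k} :
    ∀ u, APlay.cons k i u ∈ ρ.act → APlay.cons k i .nil ∈ ρ.act :=
  APlay.snoc_induction id fun _ l j ih h => ih (ρ.prefix_closed _ l j h)

def shift (k : K) (i : ar k) (h : APlay.cons k i .nil ∈ ρ.act) : Counterstrategy K ar where
  act := {s | APlay.cons k i s ∈ ρ.act}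
  nil_mem := h
  prefix_closed s := ρ.prefix_closed (.cons k i s)
  deterministic s := ρ.deterministic (.cons k i s)

def consEquiv (m : ℕ) :
    (Σ p : {p : Σ k : K, ar k // APlay.cons p.1 p.2 .nil ∈ ρ.act},
        {s : APlay K ar // APlay.cons p.1.1 p.1.2 s ∈ ρ.act ∧ s.len = m}) ≃
      {s : APlay K ar // s ∈ ρ.act ∧ s.len = m + 1} where
  toFun x := ⟨.cons x.1.1.1 x.1.1.2 x.2.1, x.2.2.1, congrArg (· + 1) x.2.2.2⟩
  invFun
    | ⟨.cons k i u, hs, hl⟩ =>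
      ⟨⟨⟨k, i⟩, ρ.cons_nil_mem u hs⟩, ⟨u, hs, Nat.succ.inj hl⟩⟩
  left_inv := by rintro ⟨⟨⟨k, i⟩, _⟩, ⟨u, _⟩⟩; rfl
  right_inv := by rintro ⟨_ | ⟨k, i, u⟩, hs, hl⟩ <;> first | rfl | cases hl

end Counterstrategy

/-- The `σ`-mass of the plays of `ρ` extending `t` by exactly `m` steps. -/
noncomputable def contProbFrom (ρ : Counterstrategy K ar) (σ : PlayMeasure K ar) :
    ℕ → APlay K ar → ℝ≥0∞
  | 0, t => σ.act t
  | m + 1, t => ∑' p : ρ.Next t, contProbFrom ρ σ m (t.snoc p.1.1 p.1.2)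

noncomputable def limContProb (ρ : Counterstrategy K ar) (σ : PlayMeasure K ar)
    (t : APlay K ar) : ℝ≥0∞ :=
  ⨅ m, contProbFrom ρ σ m t

section

variable (ρ : Counterstrategy K ar) (σ : PlayMeasure K ar)

theorem tsum_act_next_le (t : APlay K ar) :
    ∑' p : ρ.Next t, σ.act (t.snoc p.1.1 p.1.2) ≤ σ.act t := by
  simp only [PlayMeasure.act_snoc]
  exact ENNReal.tsum_comp_le_tsum_of_injective (ρ.next_fst_injective t) (σ.pass t)

theorem contProbFrom_succ_le (m : ℕ) (t : APlay K ar) :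
    contProbFrom ρ σ (m + 1) t ≤ contProbFrom ρ σ m t := by
  induction m generalizing t with
  | zero => exact tsum_act_next_le ρ σ t
  | succ m ih => exact ENNReal.tsum_le_tsum fun _ => ih _

theorem antitone_contProbFrom (t : APlay K ar) : Antitone fun m => contProbFrom ρ σ m t :=
  antitone_nat_of_succ_le fun m => contProbFrom_succ_le ρ σ m t

theorem limContProb_eq_tsum (t : APlay K ar) :
    limContProb ρ σ t = ∑' p : ρ.Next t, limContProb ρ σ (t.snoc p.1.1 p.1.2) := by
  have hfin : ∑' p : ρ.Next t, contProbFrom ρ σ 0 (t.snoc p.1.1 p.1.2) ≠ ∞ :=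
    ((tsum_act_next_le ρ σ t).trans (σ.le_one t)).trans_lt ENNReal.one_lt_top |>.ne
  calc limContProb ρ σ t = ⨅ m, contProbFrom ρ σ (m + 1) t :=
        ((antitone_contProbFrom ρ σ t).iInf_nat_add 1).symm
    _ = _ := (ENNReal.tsum_iInf_of_antitone
        (f := fun m (p : ρ.Next t) => contProbFrom ρ σ m (t.snoc p.1.1 p.1.2))
        (fun _ _ hmn _ => antitone_contProbFrom ρ σ _ hmn) hfin).symm

theorem exists_next_limContProb_ne_zero {t : APlay K ar} (ht : limContProb ρ σ t ≠ 0) :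
    ∃ p : ρ.Next t, limContProb ρ σ (t.snoc p.1.1 p.1.2) ≠ 0 := by
  by_contra! h
  exact ht ((limContProb_eq_tsum ρ σ t).trans (ENNReal.tsum_eq_zero.mpr h))

theorem limContProb_snoc_le_pass (t : APlay K ar) (k : K) (i : ar k) :
    limContProb ρ σ (t.snoc k i) ≤ σ.pass t k :=
  (iInf_le _ 0).trans_eq (σ.act_snoc t k i)

theorem contProbFrom_shift (k : K) (i : ar k) (h : APlay.cons k i .nil ∈ ρ.act) (m : ℕ)
    (t : APlay K ar) :
    contProbFrom (ρ.shift k i h) (σ.shift k i) m t = contProbFrom ρ σ m (.cons k i t) := by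
  induction m generalizing t with
  | zero => rfl
  | succ m ih => exact tsum_congr fun _ => ih _

end

theorem contProb_eq_contProbFrom_nil (m : ℕ) (ρ : Counterstrategy K ar)
    (σ : PlayMeasure K ar) : contProb ρ σ m = contProbFrom ρ σ m .nil := by
  induction m generalizing ρ σ with
  | zero =>
    refine tsum_eq_single
      (⟨.nil, ρ.nil_mem, rfl⟩ : {s : APlay K ar // s ∈ ρ.act ∧ s.len = 0}) ?_
    rintro ⟨_ | _, _, hl⟩ hne
    · exact absurd rfl hne
    · cases hl
  | succ m ih =>
    rw [contProb, ← (ρ.consEquiv m).tsum_eq, ENNReal.tsum_sigma']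
    exact tsum_congr fun p =>
      (ih _ _).trans (contProbFrom_shift ρ σ p.1.1 p.1.2 p.2 m .nil)

theorem iInf_contProb_eq_limContProb (ρ : Counterstrategy K ar) (σ : PlayMeasure K ar) :
    ⨅ m, contProb ρ σ m = limContProb ρ σ .nil :=
  iInf_congr fun m => contProb_eq_contProbFrom_nil m ρ σ

theorem exists_forall_prefixPlay (P : APlay K ar → Prop) (h_nil : P .nil)
    (h_snoc : ∀ t, P t → ∃ p : Σ k : K, ar k, P (t.snoc p.1 p.2)) :
    ∃ f : ℕ → Σ k : K, ar k, ∀ n, P (prefixPlay f n) := by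
  choose g hg using fun t : {t // P t} => h_snoc t.1 t.2
  let u : ℕ → {t // P t} := fun n =>
    Nat.rec ⟨.nil, h_nil⟩ (fun _ t => ⟨t.1.snoc (g t).1 (g t).2, hg t⟩) n
  have hu : ∀ n, prefixPlay (fun n => g (u n)) n = (u n).1 := by
    intro n
    induction n with
    | zero => rfl
    | succ n ih => exact congrArg (fun t => t.snoc (g (u n)).1 (g (u n)).2) ih
  exact ⟨_, fun n => (hu n).symm ▸ (u n).2⟩

/-- Every well-founded play-measure is victorious. -/
theorem stmt_9 {K : Type} {ar : K → Type}
    (σ : PlayMeasure K ar) (h : σ.WellFoundedPM) : Victorious σ := by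
  intro ρ
  by_contra h0
  rw [iInf_contProb_eq_limContProb] at h0
  obtain ⟨f, hf⟩ := exists_forall_prefixPlay (limContProb ρ σ · ≠ 0) h0 fun _ ht =>
    (exists_next_limContProb_ne_zero ρ σ ht).elim fun p hp => ⟨p.1, hp⟩
  exact h ⟨f, fun n => pos_iff_ne_zero.2 <|
    ne_bot_of_le_ne_bot (hf (n + 1)) (limContProb_snoc_le_pass ρ σ _ _ _)⟩
end

section
/- Let σ be a victorious play-measure of weight w. Then for every x < w there exists a finitely founded play-measure τ ≤ σ with weight at least x. -/
open scoped ENNReal Classical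

variable {K : Type} {ar : K → Type}

/-!
The capturable mass `cap` is the least fixed point of the operator bounding the value at `s.k` by
`σ(s.k)` and, for every input `i`, by the total value at the children of `s.k.i`. Below `cap` one
builds a finitely founded play-measure of any weight `x < ∑ₖ cap(k)`: values are split
proportionally among finitely many children, each child receiving strictly less than an earlier
transfinite approximant of `cap`, so the ordinal stage at which the value is captured strictly
decreases along every play of the support.

Conversely, the deficiency `σ - cap` at `s.k` is the supremum over inputs `i` of the total
deficiency at the children of `s.k.i`. A counterstrategy choosing nearly optimal inputs therefore
keeps at least half of the initial deficiency `w(σ) - ∑ₖ cap(k)` alive at every depth, and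
victoriousness forces `w(σ) ≤ ∑ₖ cap(k)`.
-/

namespace APlay

variable {K : Type} {ar : K → Type}

@[simp] lemma len_snoc (s : APlay K ar) (k : K) (i : ar k) : (s.snoc k i).len = s.len + 1 := by
  induction s with
  | nil => rfl
  | cons _ _ _ ih => simp [snoc, len, ih]

lemma snoc_ne_nil (s : APlay K ar) (k : K) (i : ar k) : s.snoc k i ≠ .nil := by
  cases s <;> simp [snoc]

lemma snoc_inj {s s' : APlay K ar} {k k' : K} {i : ar k} {i' : ar k'} :
    s.snoc k i = s'.snoc k' i' ↔ s = s' ∧ (⟨k, i⟩ : Σ k, ar k) = ⟨k', i'⟩ := by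
  induction s generalizing s' with
  | nil => cases s' <;> simp [snoc, (snoc_ne_nil _ _ _).symm]
  | cons l j t ih => cases s' <;> simp [snoc, snoc_ne_nil, ih, and_assoc]

def append : APlay K ar → APlay K ar → APlay K ar
  | p, .nil => p
  | p, .cons k i s => append (p.snoc k i) s

lemma cons_append (k : K) (i : ar k) (p s : APlay K ar) :
    (cons k i p).append s = cons k i (p.append s) := by
  induction s generalizing p with
  | nil => rfl
  | cons _ _ _ ih => exact ih _

@[simp] lemma nil_append (s : APlay K ar) : APlay.nil.append s = s := by
  induction s with
  | nil => rfl
  | cons k i s ih => exact (cons_append k i .nil s).trans (congrArg _ ih)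

end APlay

namespace ENNReal

variable {ι : Type*}

/-- The share of `v` proportional to `f` on a finite `S` with `v < ∑ j ∈ S, f j < ∞`;
zero when no such `S` exists. -/
noncomputable def propAlloc (f : ι → ℝ≥0∞) (v : ℝ≥0∞) (i : ι) : ℝ≥0∞ :=
  if h : ∃ S : Finset ι, v < ∑ j ∈ S, f j ∧ ∑ j ∈ S, f j ≠ ∞ then
    if i ∈ h.choose then f i * (v / ∑ j ∈ h.choose, f j) else 0
  else 0

variable {f : ι → ℝ≥0∞} {v : ℝ≥0∞}

lemma propAlloc_lt {i : ι} (h : 0 < propAlloc f v i) : propAlloc f v i < f i := by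
  unfold propAlloc at h ⊢
  split_ifs at h ⊢ with hS hi
  · obtain ⟨hvS, hS_top⟩ := hS.choose_spec
    have hfi_top : f i ≠ ∞ := ne_top_of_le_ne_top hS_top (Finset.single_le_sum (by simp) hi)
    have hfi0 : f i ≠ 0 := by rintro h0; simp [h0] at h
    have hS0 : ∑ j ∈ hS.choose, f j ≠ 0 := (zero_le.trans_lt hvS).ne'
    calc f i * (v / ∑ j ∈ hS.choose, f j) < f i * 1 := by
          gcongr
          rwa [ENNReal.div_lt_iff (.inl hS0) (.inl hS_top), one_mul]
      _ = f i := mul_one _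
  all_goals exact absurd h (lt_irrefl 0)

lemma tsum_propAlloc (hv : v < ∑' i, f i) (hf : ∑' i, f i ≠ ∞) : ∑' i, propAlloc f v i = v := by
  have hS : ∃ S : Finset ι, v < ∑ j ∈ S, f j ∧ ∑ j ∈ S, f j ≠ ∞ := by
    rw [ENNReal.tsum_eq_iSup_sum] at hv
    obtain ⟨S, hvS⟩ := lt_iSup_iff.1 hv
    exact ⟨S, hvS, ne_top_of_le_ne_top hf (ENNReal.sum_le_tsum S)⟩
  obtain ⟨hvS, hS_top⟩ := hS.choose_spec
  have hS0 : ∑ j ∈ hS.choose, f j ≠ 0 := (zero_le.trans_lt hvS).ne'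
  simp only [propAlloc, dif_pos hS]
  rw [tsum_eq_sum (s := hS.choose) fun j hj => if_neg hj, Finset.sum_ite_mem, Finset.inter_self,
    ← Finset.sum_mul]
  exact ENNReal.mul_div_cancel' (fun h => absurd h hS0) (fun h => absurd h hS_top)

@[simp] lemma propAlloc_zero (f : ι → ℝ≥0∞) : propAlloc f 0 = 0 := by
  ext i
  simp [propAlloc]

lemma finite_propAlloc_pos (f : ι → ℝ≥0∞) (v : ℝ≥0∞) : {i | 0 < propAlloc f v i}.Finite := by
  unfold propAlloc
  split_ifs with hS
  · refine hS.choose.finite_toSet.subset fun i hi => ?_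
    by_contra h
    rw [Set.mem_ofPred_eq, if_neg (mt Finset.mem_coe.2 h)] at hi
    exact lt_irrefl 0 hi
  · simp

end ENNReal

namespace PlayMeasure

open OrderHom OrdinalApprox ENNReal

variable {K : Type} {ar : K → Type} (σ : PlayMeasure K ar)

noncomputable def capOp : (APlay K ar → K → ℝ≥0∞) →o (APlay K ar → K → ℝ≥0∞) where
  toFun c s k := min (σ.pass s k) (⨅ i : ar k, ∑' l, c (s.snoc k i) l)
  monotone' _ _ h _ _ := min_le_min le_rfl (iInf_mono fun _ => ENNReal.tsum_le_tsum fun _ => h _ _)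

noncomputable def cap : APlay K ar → K → ℝ≥0∞ := lfp σ.capOp

lemma cap_eq (s : APlay K ar) (k : K) :
    σ.cap s k = min (σ.pass s k) (⨅ i : ar k, ∑' l, σ.cap (s.snoc k i) l) :=
  (congrFun₂ (map_lfp σ.capOp) s k).symm

lemma cap_le_pass (s : APlay K ar) (k : K) : σ.cap s k ≤ σ.pass s k :=
  (σ.cap_eq s k).trans_le (min_le_left _ _)

lemma tsum_cap_ne_top (s : APlay K ar) : ∑' k, σ.cap s k ≠ ∞ :=
  ne_top_of_le_ne_top one_ne_top ((ENNReal.tsum_le_tsum (σ.cap_le_pass s)).trans (σ.le_one s))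

noncomputable def capApprox (α : Ordinal) : APlay K ar → K → ℝ≥0∞ := lfpApprox σ.capOp ⊥ α

lemma capApprox_succ (α : Ordinal) : σ.capApprox (α + 1) = σ.capOp (σ.capApprox α) :=
  lfpApprox_add_one σ.capOp bot_le α

lemma capApprox_le_cap (α : Ordinal) : σ.capApprox α ≤ σ.cap :=
  lfpApprox_le_of_mem_fixedPoints σ.capOp (map_lfp σ.capOp) bot_le α

lemma exists_lt_capApprox_succ_of_lt_capApprox {v : ℝ≥0∞} {α : Ordinal} {s : APlay K ar} {k : K}
    (h : v < σ.capApprox α s k) : ∃ β < α, v < σ.capApprox (β + 1) s k := by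
  rw [capApprox, lfpApprox, bot_sup_eq] at h
  simp only [_root_.iSup_apply, lt_iSup_iff] at h
  obtain ⟨β, hβ, hv⟩ := h
  exact ⟨β, hβ, by rwa [capApprox_succ]⟩

lemma exists_lt_capApprox_succ {v : ℝ≥0∞} {s : APlay K ar} {k : K} (h : v < σ.cap s k) :
    ∃ β, v < σ.capApprox (β + 1) s k := by
  rw [cap, ← lfpApprox_ord_eq_lfp] at h
  obtain ⟨β, -, hv⟩ := σ.exists_lt_capApprox_succ_of_lt_capApprox h
  exact ⟨β, hv⟩

noncomputable def capRank (v : ℝ≥0∞) (s : APlay K ar) (k : K) : Ordinal :=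
  sInf {β | v < σ.capApprox (β + 1) s k}

lemma lt_capApprox_capRank_succ {v : ℝ≥0∞} {s : APlay K ar} {k : K} (h : v < σ.cap s k) :
    v < σ.capApprox (σ.capRank v s k + 1) s k :=
  csInf_mem (σ.exists_lt_capApprox_succ h)

lemma capRank_lt {a v : ℝ≥0∞} {s s' : APlay K ar} {k l : K}
    (h : a < σ.capApprox (σ.capRank v s k) s' l) : σ.capRank a s' l < σ.capRank v s k := by
  obtain ⟨β, hβ, ha⟩ := σ.exists_lt_capApprox_succ_of_lt_capApprox h
  exact lt_of_le_of_lt (csInf_le' ha) hβ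

/-- Every child gets strictly less than the approximant of `cap` at the stage that captured `v`,
so capture ranks strictly decrease from a node to its children. -/
noncomputable def childShare (p : APlay K ar) (v : ℝ≥0∞) (k : K) (i : ar k) : K → ℝ≥0∞ :=
  propAlloc (σ.capApprox (σ.capRank v p k) (p.snoc k i)) v

variable {σ} {p : APlay K ar} {v : ℝ≥0∞} {k l : K} {i : ar k}

lemma tsum_childShare (hv : v < σ.cap p k) (i : ar k) : ∑' l, σ.childShare p v k i l = v := by
  have hcap := σ.lt_capApprox_capRank_succ hv
  rw [capApprox_succ] at hcap
  refine tsum_propAlloc (hcap.trans_le ((min_le_right _ _).trans (iInf_le _ i))) ?_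
  exact ne_top_of_le_ne_top (σ.tsum_cap_ne_top (p.snoc k i))
    (ENNReal.tsum_le_tsum (σ.capApprox_le_cap _ _))

lemma childShare_lt_capApprox (h : 0 < σ.childShare p v k i l) :
    σ.childShare p v k i l < σ.capApprox (σ.capRank v p k) (p.snoc k i) l :=
  propAlloc_lt h

lemma capRank_childShare_lt (h : 0 < σ.childShare p v k i l) :
    σ.capRank (σ.childShare p v k i l) (p.snoc k i) l < σ.capRank v p k :=
  σ.capRank_lt (childShare_lt_capApprox h)

lemma childShare_lt_cap (h : 0 < σ.childShare p v k i l) :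
    σ.childShare p v k i l < σ.cap (p.snoc k i) l :=
  (childShare_lt_capApprox h).trans_le (σ.capApprox_le_cap _ _ _)

variable (σ)

/-- The values at `p.append s` obtained by passing the values `g` at `p` down along `s`. -/
noncomputable def shareFrom (p : APlay K ar) (g : K → ℝ≥0∞) : APlay K ar → K → ℝ≥0∞
  | .nil => g
  | .cons k i s => shareFrom (p.snoc k i) (σ.childShare p (g k) k i) s

def BelowCap (p : APlay K ar) (g : K → ℝ≥0∞) : Prop :=
  ∀ k, 0 < g k → g k < σ.cap p k

variable {σ} {g : K → ℝ≥0∞}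

lemma BelowCap.le_pass (hg : σ.BelowCap p g) (k : K) : g k ≤ σ.pass p k := by
  rcases eq_zero_or_pos (g k) with h | h
  · rw [h]
    exact zero_le
  · exact (hg k h).le.trans (σ.cap_le_pass p k)

lemma belowCap_shareFrom (hg : σ.BelowCap p g) (s : APlay K ar) :
    σ.BelowCap (p.append s) (σ.shareFrom p g s) := by
  induction s generalizing p g with
  | nil => exact hg
  | cons k i s ih => exact ih fun _ => childShare_lt_cap

lemma shareFrom_snoc (s : APlay K ar) (k : K) (i : ar k) :
    σ.shareFrom p g (s.snoc k i) = σ.childShare (p.append s) (σ.shareFrom p g s k) k i := by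
  induction s generalizing p g with
  | nil => rfl
  | cons _ _ _ ih => exact ih

lemma shareFrom_eq_tsum_snoc (hg : σ.BelowCap p g) (s : APlay K ar) (k : K) (i : ar k) :
    σ.shareFrom p g s k = ∑' l, σ.shareFrom p g (s.snoc k i) l := by
  rw [shareFrom_snoc]
  rcases eq_zero_or_pos (σ.shareFrom p g s k) with h | h
  · simp [h, childShare]
  · exact (tsum_childShare (belowCap_shareFrom hg s k h) i).symm

lemma finite_shareFrom_pos (hg : {k | 0 < g k}.Finite) (s : APlay K ar) :
    {l | 0 < σ.shareFrom p g s l}.Finite := by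
  induction s generalizing p g with
  | nil => exact hg
  | cons _ _ _ ih => exact ih (finite_propAlloc_pos _ _)

variable (σ)

lemma belowCap_propAlloc_cap (x : ℝ≥0∞) : σ.BelowCap .nil (propAlloc (σ.cap .nil) x) :=
  fun _ => propAlloc_lt

noncomputable def foundedPart (x : ℝ≥0∞) : PlayMeasure K ar where
  pass := σ.shareFrom .nil (propAlloc (σ.cap .nil) x)
  le_one t := (ENNReal.tsum_le_tsum fun k => by
      simpa using (belowCap_shareFrom (σ.belowCap_propAlloc_cap x) t).le_pass k).trans (σ.le_one t)
  consistent := shareFrom_eq_tsum_snoc (σ.belowCap_propAlloc_cap x)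

lemma weight_foundedPart {x : ℝ≥0∞} (hx : x < ∑' k, σ.cap .nil k) : (σ.foundedPart x).weight = x :=
  tsum_propAlloc hx (σ.tsum_cap_ne_top _)

variable (x : ℝ≥0∞)

lemma foundedPart_pass_le (s : APlay K ar) (k : K) : (σ.foundedPart x).pass s k ≤ σ.pass s k := by
  have h := (belowCap_shareFrom (σ.belowCap_propAlloc_cap x) s).le_pass k
  rwa [APlay.nil_append] at h

lemma foundedPart_pass_snoc (s : APlay K ar) (k : K) (i : ar k) :
    (σ.foundedPart x).pass (s.snoc k i) = σ.childShare s ((σ.foundedPart x).pass s k) k i := by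
  have h := shareFrom_snoc (σ := σ) (p := .nil) (g := propAlloc (σ.cap .nil) x) s k i
  rwa [APlay.nil_append] at h

lemma wellFoundedPM_foundedPart : (σ.foundedPart x).WellFoundedPM := by
  rintro ⟨f, hf⟩
  obtain ⟨n, hn⟩ := WellFounded.not_rel_apply_succ (r := (· < ·))
    fun n => σ.capRank ((σ.foundedPart x).pass (prefixPlay f n) (f n).1) (prefixPlay f n) (f n).1
  have h := hf (n + 1)
  simp only [prefixPlay, foundedPart_pass_snoc] at h hn
  exact hn (capRank_childShare_lt h)

lemma finFounded_foundedPart : (σ.foundedPart x).FinFounded :=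
  ⟨σ.wellFoundedPM_foundedPart x, finite_shareFrom_pos (finite_propAlloc_pos _ _)⟩

noncomputable def deficiency (s : APlay K ar) (k : K) : ℝ≥0∞ := σ.pass s k - σ.cap s k

lemma deficiency_ne_top (s : APlay K ar) (k : K) : σ.deficiency s k ≠ ∞ :=
  ne_top_of_le_ne_top one_ne_top (tsub_le_self.trans ((ENNReal.le_tsum k).trans (σ.le_one s)))

lemma tsum_deficiency (s : APlay K ar) : ∑' k, σ.deficiency s k = σ.act s - ∑' k, σ.cap s k := by
  refine ENNReal.eq_sub_of_add_eq (σ.tsum_cap_ne_top s) ?_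
  rw [← ENNReal.tsum_add]
  exact tsum_congr fun k => tsub_add_cancel_of_le (σ.cap_le_pass s k)

lemma deficiency_eq_iSup (s : APlay K ar) (k : K) :
    σ.deficiency s k = ⨆ i : ar k, ∑' l, σ.deficiency (s.snoc k i) l := by
  simp only [tsum_deficiency, act, ← σ.consistent s k]
  rw [deficiency, cap_eq, tsub_min, ENNReal.sub_iInf]

/-- The fraction of the initial deficiency that good replies keep alive at depth `m`. -/
noncomputable def slack (m : ℕ) : ℝ≥0∞ := 2⁻¹ + ((m : ℝ≥0∞) + 2)⁻¹

lemma slack_zero : slack 0 = 1 := by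
  simp [slack, ENNReal.inv_two_add_inv_two]

lemma slack_succ_lt (m : ℕ) : slack (m + 1) < slack m := by
  unfold slack
  gcongr <;> simp

lemma inv_two_le_slack (m : ℕ) : 2⁻¹ ≤ slack m := le_self_add

lemma slack_ne_zero (m : ℕ) : slack m ≠ 0 := by simp [slack]

lemma slack_ne_top (m : ℕ) : slack m ≠ ∞ := by simp [slack]

def IsGoodReply (s : APlay K ar) (k : K) (i : ar k) : Prop :=
  slack (s.len + 1) * σ.deficiency s k < slack s.len * ∑' l, σ.deficiency (s.snoc k i) l

lemma exists_isGoodReply {s : APlay K ar} {k : K} (h : σ.deficiency s k ≠ 0) :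
    ∃ i, σ.IsGoodReply s k i := by
  have hlt : slack (s.len + 1) * σ.deficiency s k
      < ⨆ i, slack s.len * ∑' l, σ.deficiency (s.snoc k i) l := by
    rw [← ENNReal.mul_iSup, ← deficiency_eq_iSup]
    exact (ENNReal.mul_lt_mul_iff_left h (σ.deficiency_ne_top s k)).2 (slack_succ_lt _)
  exact lt_iSup_iff.1 hlt

noncomputable def goodReply (s : APlay K ar) (k : K) : Option (ar k) :=
  if h : ∃ i, σ.IsGoodReply s k i then some h.choose else none

inductive GoodPlay : APlay K ar → Prop
  | nil : GoodPlay .nil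
  | snoc {s : APlay K ar} {k : K} {i : ar k} :
      GoodPlay s → σ.goodReply s k = some i → GoodPlay (s.snoc k i)

lemma goodPlay_snoc_iff {s : APlay K ar} {k : K} {i : ar k} :
    σ.GoodPlay (s.snoc k i) ↔ σ.GoodPlay s ∧ σ.goodReply s k = some i := by
  refine ⟨fun h => ?_, fun h => .snoc h.1 h.2⟩
  generalize ht : s.snoc k i = t at h
  cases h with
  | nil => exact absurd ht (APlay.snoc_ne_nil _ _ _)
  | snoc hs hr =>
    obtain ⟨rfl, h⟩ := APlay.snoc_inj.1 ht
    cases h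
    exact ⟨hs, hr⟩

noncomputable def goodCounter : Counterstrategy K ar where
  act := {s | σ.GoodPlay s}
  nil_mem := .nil
  prefix_closed _ _ _ h := (σ.goodPlay_snoc_iff.1 h).1
  deterministic _ _ _ _ hi hj :=
    Option.some_injective _ ((σ.goodPlay_snoc_iff.1 hi).2.symm.trans (σ.goodPlay_snoc_iff.1 hj).2)

noncomputable def deficiencyMass (ρ : Counterstrategy K ar) (m : ℕ) : ℝ≥0∞ :=
  ∑' q : {s : APlay K ar // s ∈ ρ.act ∧ s.len = m} × K, σ.deficiency q.1 q.2

lemma deficiencyMass_le_contProb (ρ : Counterstrategy K ar) (m : ℕ) :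
    σ.deficiencyMass ρ m ≤ contProb ρ σ m := by
  rw [deficiencyMass, ENNReal.tsum_prod']
  exact ENNReal.tsum_le_tsum fun _ => ENNReal.tsum_le_tsum fun _ => tsub_le_self

lemma tsum_deficiency_nil_le (ρ : Counterstrategy K ar) :
    ∑' k, σ.deficiency .nil k ≤ σ.deficiencyMass ρ 0 :=
  ENNReal.tsum_comp_le_tsum_of_injective
    (f := fun k => ((⟨.nil, ρ.nil_mem, rfl⟩ : {s : APlay K ar // s ∈ ρ.act ∧ s.len = 0}), k))
    (fun _ _ h => (Prod.ext_iff.1 h).2) fun q => σ.deficiency q.1 q.2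

lemma slack_mul_deficiencyMass_le (m : ℕ) :
    slack (m + 1) * σ.deficiencyMass σ.goodCounter m
      ≤ slack m * σ.deficiencyMass σ.goodCounter (m + 1) := by
  let P : Set ({s : APlay K ar // s ∈ σ.goodCounter.act ∧ s.len = m} × K) :=
    {q | ∃ i, σ.IsGoodReply q.1.1 q.2 i}
  let child (q : P) : {s : APlay K ar // s ∈ σ.goodCounter.act ∧ s.len = m + 1} :=
    ⟨q.1.1.1.snoc q.1.2 (Exists.choose q.2),
      σ.goodPlay_snoc_iff.2 ⟨q.1.1.2.1, dif_pos q.2⟩, by simp [q.1.1.2.2]⟩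
  have hchild : Function.Injective fun p : P × K => (child p.1, p.2) := by
    rintro ⟨⟨⟨⟨s, hs⟩, k⟩, hq⟩, l⟩ ⟨⟨⟨⟨s', hs'⟩, k'⟩, hq'⟩, l'⟩ h
    simp only [child, Prod.mk.injEq, Subtype.mk.injEq, APlay.snoc_inj, Sigma.mk.injEq] at h
    obtain ⟨⟨rfl, rfl, -⟩, rfl⟩ := h
    rfl
  calc slack (m + 1) * σ.deficiencyMass σ.goodCounter m
      = ∑' q : P, slack (m + 1) * σ.deficiency q.1.1.1 q.1.2 := by
        rw [deficiencyMass, ← ENNReal.tsum_mul_left]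
        exact (tsum_subtype_eq_of_support_subset fun q hq =>
          σ.exists_isGoodReply (right_ne_zero_of_mul hq)).symm
    _ ≤ ∑' q : P, slack m * ∑' l, σ.deficiency (child q).1 l := by
        refine ENNReal.tsum_le_tsum fun q => ?_
        have hgood := Exists.choose_spec q.2
        rw [IsGoodReply, q.1.1.2.2] at hgood
        exact hgood.le
    _ = slack m * ∑' p : P × K, σ.deficiency (child p.1).1 p.2 := by
        rw [ENNReal.tsum_mul_left, ENNReal.tsum_prod']
    _ ≤ slack m * σ.deficiencyMass σ.goodCounter (m + 1) := by
        gcongr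
        exact ENNReal.tsum_comp_le_tsum_of_injective hchild fun q => σ.deficiency q.1.1 q.2

lemma slack_mul_le_deficiencyMass (m : ℕ) :
    slack m * (σ.weight - ∑' k, σ.cap .nil k) ≤ σ.deficiencyMass σ.goodCounter m := by
  induction m with
  | zero =>
    rw [slack_zero, one_mul, weight, ← tsum_deficiency]
    exact σ.tsum_deficiency_nil_le _
  | succ m ih =>
    rw [← ENNReal.mul_le_mul_iff_right (slack_ne_zero m) (slack_ne_top m), mul_left_comm]
    exact (mul_le_mul_right ih _).trans (σ.slack_mul_deficiencyMass_le m)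

lemma weight_le_tsum_cap (hσ : Victorious σ) : σ.weight ≤ ∑' k, σ.cap .nil k := by
  have h : 2⁻¹ * (σ.weight - ∑' k, σ.cap .nil k) ≤ 0 := by
    rw [← hσ σ.goodCounter]
    exact le_iInf fun m => (mul_le_mul_left (inv_two_le_slack m) _).trans
      ((σ.slack_mul_le_deficiencyMass m).trans (σ.deficiencyMass_le_contProb _ m))
  simpa [tsub_eq_zero_iff_le] using h

end PlayMeasure

/-- For a victorious play-measure `σ` and every `x < w(σ)` there is a
finitely founded play-measure `τ ≤ σ` of weight at least `x`. -/
theorem stmt_12 {K : Type} {ar : K → Type} (σ : PlayMeasure K ar)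
    (hσ : Victorious σ) :
    ∀ x < σ.weight, ∃ τ : PlayMeasure K ar,
      (∀ s k, τ.pass s k ≤ σ.pass s k) ∧ x ≤ τ.weight ∧ τ.FinFounded := by
  intro x hx
  refine ⟨σ.foundedPart x, σ.foundedPart_pass_le x, ?_, σ.finFounded_foundedPart x⟩
  exact (σ.weight_foundedPart (hx.trans_le (σ.weight_le_tsum_cap hσ))).ge
end
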